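/- arXiv:math/0403071 — 11 statements merged into one kernel-verified Lean document; each statement's English description precedes it below -/
import Mathlib

section
/- Let G be a locally compact topological groupoid. Then the unit space G⁽⁰⁾ is locally closed in G, hence locally compact. If moreover G is σ-compact, then G⁽⁰⁾ is σ-compact. -/
open Set Topology

/-- A space is locally compact in the sense of the paper if every point has a
compact (quasi-compact and Hausdorff) neighborhood. -/
def LocCompact (X : Type*) [TopologicalSpace X] : Prop :=
  ∀ x : X, ∃ K : Set X, K ∈ nhds x ∧ IsCompact K ∧ T2Space K

/-- A topological groupoid with arrow space `G` and unit space `G0`: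
range `r`, source `s`, unit inclusion, inverse and (partial) composition,
all continuous, satisfying the groupoid axioms; the unit space is embedded
in the arrow space. -/
structure GroupoidStruct (G G0 : Type*) [TopologicalSpace G] [TopologicalSpace G0] where
  r : G → G0
  s : G → G0
  unit : G0 → G
  inv : G → G
  comp : (g h : G) → s g = r h → G
  r_unit : ∀ x, r (unit x) = x
  s_unit : ∀ x, s (unit x) = x
  r_comp : ∀ g h hh, r (comp g h hh) = r g
  s_comp : ∀ g h hh, s (comp g h hh) = s h
  r_inv : ∀ g, r (inv g) = s g
  s_inv : ∀ g, s (inv g) = r g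
  comp_unit_left : ∀ g, comp (unit (r g)) g (s_unit (r g)) = g
  comp_unit_right : ∀ g, comp g (unit (s g)) ((r_unit (s g)).symm) = g
  comp_inv_self : ∀ g, comp g (inv g) ((r_inv g).symm) = unit (r g)
  inv_comp_self : ∀ g, comp (inv g) g (s_inv g) = unit (s g)
  assoc : ∀ g h k (hgh : s g = r h) (hhk : s h = r k),
    comp (comp g h hgh) k ((s_comp g h hgh).trans hhk) =
    comp g (comp h k hhk) (hgh.trans (r_comp h k hhk).symm)
  continuous_r : Continuous r
  continuous_s : Continuous s
  continuous_unit : Continuous unit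
  continuous_inv : Continuous inv
  continuous_comp : Continuous (fun p : {p : G × G // s p.1 = r p.2} => comp p.1.1 p.1.2 p.2)
  isEmbedding_unit : Topology.IsEmbedding unit

/-- Key local structure: around each unit there is a compact Hausdorff neighborhood `K`
and an open set `W ⊆ K` containing the unit such that `W \ range unit` is open. -/
lemma key_lemma {G G0 : Type*} [TopologicalSpace G] [TopologicalSpace G0]
    (𝔾 : GroupoidStruct G G0) (hG : LocCompact G) (x0 : G0) :
    ∃ K W : Set G, K ∈ nhds (𝔾.unit x0) ∧ IsCompact K ∧ T2Space K ∧
      IsOpen W ∧ 𝔾.unit x0 ∈ W ∧ W ⊆ K ∧ IsOpen (W \ Set.range 𝔾.unit) := by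
  obtain ⟨K, hKn, hKc, hKt2⟩ := hG (𝔾.unit x0)
  set f : G → G := fun g => 𝔾.unit (𝔾.r g) with hf
  have hfc : Continuous f := 𝔾.continuous_unit.comp 𝔾.continuous_r
  have hmem : ∀ g, g ∈ Set.range 𝔾.unit ↔ f g = g := by
    intro g
    constructor
    · rintro ⟨y, rfl⟩; simp [hf, 𝔾.r_unit]
    · intro h; exact ⟨𝔾.r g, h⟩
  set U : Set G := interior K with hU
  have hUopen : IsOpen U := isOpen_interior
  have hUK : U ⊆ K := interior_subset
  have hxU : 𝔾.unit x0 ∈ U := mem_interior_iff_mem_nhds.2 hKn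
  set W : Set G := U ∩ f ⁻¹' U with hW
  have hWopen : IsOpen W := hUopen.inter (hUopen.preimage hfc)
  have hxW : 𝔾.unit x0 ∈ W := by
    constructor
    · exact hxU
    · show f (𝔾.unit x0) ∈ U
      have : f (𝔾.unit x0) = 𝔾.unit x0 := (hmem _).1 ⟨x0, rfl⟩
      rw [this]; exact hxU
  refine ⟨K, W, hKn, hKc, hKt2, hWopen, hxW, fun g hg => hUK hg.1, ?_⟩
  -- W \ range unit is open
  rw [isOpen_iff_mem_nhds]
  rintro g ⟨hgW, hgS⟩
  have hne : f g ≠ g := fun h => hgS ((hmem g).2 h)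
  have hgK : (⟨g, hUK hgW.1⟩ : K) ≠ ⟨f g, hUK hgW.2⟩ := by
    intro h
    exact hne (congrArg Subtype.val h).symm
  obtain ⟨v2, v1, hv2, hv1, hg2, hg1, hdisj⟩ := t2_separation hgK
  obtain ⟨O2, hO2, rfl⟩ := isOpen_induced_iff.1 hv2
  obtain ⟨O1, hO1, rfl⟩ := isOpen_induced_iff.1 hv1
  have : W ∩ O2 ∩ f ⁻¹' O1 ∈ nhds g := by
    apply IsOpen.mem_nhds ((hWopen.inter hO2).inter (hO1.preimage hfc))
    exact ⟨⟨hgW, hg2⟩, hg1⟩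
  refine Filter.mem_of_superset this ?_
  rintro h ⟨⟨hhW, hhO2⟩, hhO1⟩
  refine ⟨hhW, fun hhS => ?_⟩
  have hfe : f h = h := (hmem h).1 hhS
  have hhK : h ∈ K := hUK hhW.1
  have h2 : (⟨h, hhK⟩ : K) ∈ Subtype.val ⁻¹' O2 := hhO2
  have h1 : (⟨h, hhK⟩ : K) ∈ Subtype.val ⁻¹' O1 := by
    show h ∈ O1; rw [← hfe]; exact hhO1
  exact Set.disjoint_left.1 hdisj h2 h1

/-- For a locally compact groupoid, the unit space (identified with its image in the
arrow space) is locally closed in `G`, hence locally compact; and if `G` is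
σ-compact then the unit space is σ-compact. -/
theorem stmt3 {G G0 : Type*} [TopologicalSpace G] [TopologicalSpace G0]
    (𝔾 : GroupoidStruct G G0) (hG : LocCompact G) :
    IsLocallyClosed (Set.range 𝔾.unit) ∧
    LocCompact (Set.range 𝔾.unit) ∧
    ((∃ K : ℕ → Set G, (∀ n, IsCompact (K n)) ∧ ⋃ n, K n = univ) →
      ∃ K : ℕ → Set G0, (∀ n, IsCompact (K n)) ∧ ⋃ n, K n = univ) := by
  set S : Set G := Set.range 𝔾.unit with hS
  choose K W hKn hKc hKt2 hWopen hxW hWK hWSopen using key_lemma 𝔾 hG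
  refine ⟨?_, ?_, ?_⟩
  · -- locally closed
    set Ω : Set G := ⋃ x0, W x0 with hΩ
    have hΩopen : IsOpen Ω := isOpen_iUnion hWopen
    have hdiff : IsOpen (Ω \ S) := by
      have : Ω \ S = ⋃ x0, (W x0 \ S) := by
        ext g
        simp only [hΩ, Set.mem_diff, Set.mem_iUnion]
        tauto
      rw [this]
      exact isOpen_iUnion hWSopen
    show ∃ U Z, IsOpen U ∧ IsClosed Z ∧ S = U ∩ Z
    refine ⟨Ω, (Ω \ S)ᶜ, hΩopen, hdiff.isClosed_compl, ?_⟩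
    ext g
    constructor
    · rintro ⟨x0, rfl⟩
      exact ⟨Set.mem_iUnion.2 ⟨x0, hxW x0⟩, fun h => h.2 ⟨x0, rfl⟩⟩
    · rintro ⟨hgΩ, hgc⟩
      by_contra hgS
      exact hgc ⟨hgΩ, hgS⟩
  · -- locally compact
    rintro ⟨g, x0, rfl⟩
    haveI : CompactSpace (K x0) := isCompact_iff_compactSpace.1 (hKc x0)
    haveI : T2Space (K x0) := hKt2 x0
    have hxK : 𝔾.unit x0 ∈ K x0 := mem_of_mem_nhds (hKn x0)
    set x' : K x0 := ⟨𝔾.unit x0, hxK⟩ with hx'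
    have hW' : (Subtype.val ⁻¹' W x0 : Set (K x0)) ∈ nhds x' :=
      ((hWopen x0).preimage continuous_subtype_val).mem_nhds (hxW x0)
    obtain ⟨L', hL'n, hL'sub, hL'c⟩ :=
      LocallyCompactSpace.local_compact_nhds x' _ hW'
    set L : Set G := Subtype.val '' L' with hL
    have hLc : IsCompact L := hL'c.image continuous_subtype_val
    have hLW : L ⊆ W x0 := by rintro g ⟨g', hg', rfl⟩; exact hL'sub hg'
    have hLK : L ⊆ K x0 := fun g hg => (hWK x0) (hLW hg)
    have hLn : L ∈ nhds (𝔾.unit x0) := by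
      rw [mem_nhds_iff] at hL'n
      obtain ⟨t, ht, htopen, hxt⟩ := hL'n
      obtain ⟨O, hO, rfl⟩ := isOpen_induced_iff.1 htopen
      refine Filter.mem_of_superset
        (Filter.inter_mem (hO.mem_nhds hxt) (hKn x0)) ?_
      rintro g ⟨hgO, hgK⟩
      exact ⟨⟨g, hgK⟩, ht hgO, rfl⟩
    -- the compact neighborhood inside S
    refine ⟨Subtype.val ⁻¹' L, continuous_subtype_val.continuousAt.preimage_mem_nhds hLn, ?_, ?_⟩
    · rw [Subtype.isCompact_iff, Set.image_preimage_eq_inter_range, Subtype.range_coe]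
      have : L ∩ S = L ∩ (W x0 \ S)ᶜ := by
        ext g
        simp only [Set.mem_inter_iff, Set.mem_compl_iff, Set.mem_diff]
        constructor
        · rintro ⟨hgL, hgS⟩; exact ⟨hgL, fun h => h.2 hgS⟩
        · rintro ⟨hgL, h⟩
          refine ⟨hgL, ?_⟩
          by_contra hgS
          exact h ⟨hLW hgL, hgS⟩
      rw [this]
      exact (hLc).inter_right (hWSopen x0).isClosed_compl
    · refine T2Space.of_injective_continuous
        (f := fun n : (Subtype.val ⁻¹' L : Set S) => (⟨n.1.1, hLK n.2⟩ : K x0)) ?_ ?_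
      · intro a b hab
        apply Subtype.ext; apply Subtype.ext
        have := congrArg Subtype.val hab
        exact this
      · exact Continuous.subtype_mk (continuous_subtype_val.comp continuous_subtype_val) _
  · -- sigma-compact
    rintro ⟨Kn, hKnc, hKnU⟩
    refine ⟨fun n => 𝔾.r '' Kn n, fun n => (hKnc n).image 𝔾.continuous_r, ?_⟩
    apply Set.eq_univ_of_forall
    intro y
    have : 𝔾.unit y ∈ ⋃ n, Kn n := hKnU ▸ Set.mem_univ _
    obtain ⟨n, hn⟩ := Set.mem_iUnion.1 this
    exact Set.mem_iUnion.2 ⟨n, ⟨𝔾.unit y, hn, 𝔾.r_unit y⟩⟩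
end

section
/- Let G be a locally compact topological groupoid whose unit space G⁽⁰⁾ is Hausdorff. Then for every unit x, the source fiber G_x = s^{-1}(x) is Hausdorff. -/
open Set Topology

/-- Congruence for the partial composition, with both proofs explicit. -/
theorem GroupoidStruct.comp_congr {G G0 : Type*} [TopologicalSpace G] [TopologicalSpace G0]
    (𝔾 : GroupoidStruct G G0) {a a' b b' : G} (ea : a = a') (eb : b = b')
    (p : 𝔾.s a = 𝔾.r b) (p' : 𝔾.s a' = 𝔾.r b') :
    𝔾.comp a b p = 𝔾.comp a' b' p' := by
  subst ea; subst eb; rfl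

/-- If `G` is a locally compact groupoid with Hausdorff unit space, then every
source fiber `G_x = s⁻¹(x)` is Hausdorff. -/
theorem stmt4 {G G0 : Type*} [TopologicalSpace G] [TopologicalSpace G0]
    (𝔾 : GroupoidStruct G G0) (hG : LocCompact G) [T2Space G0] :
    ∀ x : G0, T2Space (𝔾.s ⁻¹' {x}) := by
  intro x
  refine t2_iff_nhds.mpr ?_
  intro a b hab
  have hsg : 𝔾.s (a : G) = x := a.2
  have hsh : 𝔾.s (b : G) = x := b.2
  set F : Filter G := Filter.map Subtype.val (nhds a ⊓ nhds b) with hFdef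
  have hne : F.NeBot := Filter.NeBot.map hab _
  haveI := hne
  have hFg : F ≤ nhds (a : G) := by
    calc F ≤ Filter.map Subtype.val (nhds a) := Filter.map_mono inf_le_left
    _ ≤ nhds (a : G) := continuous_subtype_val.tendsto a
  have hFh : F ≤ nhds (b : G) := by
    calc F ≤ Filter.map Subtype.val (nhds b) := Filter.map_mono inf_le_right
    _ ≤ nhds (b : G) := continuous_subtype_val.tendsto b
  -- ranges agree, since G0 is Hausdorff
  have hr : 𝔾.r (a : G) = 𝔾.r (b : G) := by
    have h1 : Filter.Tendsto 𝔾.r F (nhds (𝔾.r (a : G))) :=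
      (𝔾.continuous_r.tendsto _).mono_left hFg
    have h2 : Filter.Tendsto 𝔾.r F (nhds (𝔾.r (b : G))) :=
      (𝔾.continuous_r.tendsto _).mono_left hFh
    exact tendsto_nhds_unique h1 h2
  have hhk : 𝔾.s (𝔾.inv (a : G)) = 𝔾.r (b : G) := (𝔾.s_inv _).trans hr
  set m : G := 𝔾.comp (𝔾.inv (a : G)) (b : G) hhk with hmdef
  -- the map p ↦ (inv p) · p tends to m along F
  have hδ : Filter.Tendsto (fun p : G => 𝔾.comp (𝔾.inv p) p (𝔾.s_inv p)) F (nhds m) := by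
    have hχ : Filter.Tendsto
        (fun p : G => (⟨(𝔾.inv p, p), 𝔾.s_inv p⟩ : {q : G × G // 𝔾.s q.1 = 𝔾.r q.2}))
        F (nhds (⟨(𝔾.inv (a : G), (b : G)), hhk⟩ : {q : G × G // 𝔾.s q.1 = 𝔾.r q.2})) := by
      rw [tendsto_subtype_rng]
      exact ((𝔾.continuous_inv.tendsto _).mono_left hFg).prodMk_nhds
        (Filter.tendsto_id'.mpr hFh)
    exact (𝔾.continuous_comp.tendsto _).comp hχ
  -- but that map is constantly `unit x` on the fiber, which belongs to F
  have hS : (𝔾.s ⁻¹' {x}) ∈ F := by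
    rw [hFdef, Filter.mem_map]
    have : (Subtype.val : (𝔾.s ⁻¹' {x}) → G) ⁻¹' (𝔾.s ⁻¹' {x}) = Set.univ := by
      ext p; simp
    rw [this]
    exact Filter.univ_mem
  have hconst : Filter.Tendsto (fun _ : G => 𝔾.unit x) F (nhds m) := by
    refine Filter.Tendsto.congr' ?_ hδ
    filter_upwards [hS] with p hp
    have hps : 𝔾.s p = x := hp
    rw [𝔾.inv_comp_self p, hps]
  -- hence `unit x` lies in every neighborhood of m
  have hmemU : ∀ U ∈ nhds m, 𝔾.unit x ∈ U := by
    intro U hU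
    by_contra hux
    have hpre : (fun _ : G => 𝔾.unit x) ⁻¹' U ∈ F := hconst hU
    have hempty : (fun _ : G => 𝔾.unit x) ⁻¹' U = (∅ : Set G) := by
      ext p; simp [hux]
    rw [hempty] at hpre
    exact hne.ne (Filter.empty_mem_iff_bot.mp hpre)
  -- local compactness at m forces m = unit x
  have hm : m = 𝔾.unit x := by
    by_contra hmx
    obtain ⟨K, hK, _hKc, hKt2⟩ := hG m
    have hintK : interior K ∈ nhds m := interior_mem_nhds.mpr hK
    have hmint : m ∈ interior K := mem_of_mem_nhds hintK
    have hmK : m ∈ K := interior_subset hmint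
    have huK : 𝔾.unit x ∈ interior K := hmemU _ hintK
    have huKK : 𝔾.unit x ∈ K := interior_subset huK
    haveI := hKt2
    have hne2 : (⟨m, hmK⟩ : K) ≠ (⟨𝔾.unit x, huKK⟩ : K) := by
      intro hEq
      exact hmx (Subtype.ext_iff.mp hEq)
    obtain ⟨A, B, hA, hB, hmA, huB, hAB⟩ := t2_separation hne2
    obtain ⟨A', hA'o, hA'eq⟩ := isOpen_induced_iff.mp hA
    have hmA' : m ∈ A' := by
      have : (⟨m, hmK⟩ : K) ∈ Subtype.val ⁻¹' A' := by rw [hA'eq]; exact hmA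
      exact this
    have hU2 : A' ∩ interior K ∈ nhds m :=
      (hA'o.inter isOpen_interior).mem_nhds ⟨hmA', hmint⟩
    have hu2 : 𝔾.unit x ∈ A' ∩ interior K := hmemU _ hU2
    have hqA : (⟨𝔾.unit x, huKK⟩ : K) ∈ A := by
      rw [← hA'eq]; exact hu2.1
    exact Set.disjoint_left.mp hAB hqA huB
  -- conclude b = a
  have hgh : 𝔾.s (a : G) = 𝔾.r (𝔾.inv (a : G)) := (𝔾.r_inv _).symm
  have hassoc := 𝔾.assoc (a : G) (𝔾.inv (a : G)) (b : G) hgh hhk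
  have key : (b : G) = 𝔾.comp (a : G) m (hgh.trans (𝔾.r_comp _ _ _).symm) := by
    calc (b : G)
        = 𝔾.comp (𝔾.unit (𝔾.r (b : G))) (b : G) (𝔾.s_unit _) := (𝔾.comp_unit_left _).symm
      _ = 𝔾.comp (𝔾.comp (a : G) (𝔾.inv (a : G)) hgh) (b : G)
            ((𝔾.s_comp _ _ _).trans hhk) :=
          (𝔾.comp_congr (by rw [𝔾.comp_inv_self, hr]) rfl _ _).symm
      _ = 𝔾.comp (a : G) (𝔾.comp (𝔾.inv (a : G)) (b : G) hhk)
            (hgh.trans (𝔾.r_comp _ _ _).symm) := hassoc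
  have hfinal : (b : G) = (a : G) := by
    calc (b : G)
        = 𝔾.comp (a : G) m (hgh.trans (𝔾.r_comp _ _ _).symm) := key
      _ = 𝔾.comp (a : G) (𝔾.unit (𝔾.s (a : G))) ((𝔾.r_unit _).symm) :=
          𝔾.comp_congr rfl (hm.trans (congrArg 𝔾.unit hsg.symm)) _ _
      _ = (a : G) := 𝔾.comp_unit_right _
  exact (Subtype.ext hfinal).symm
end

section
/- Let G be a topological groupoid whose unit space G⁽⁰⁾ is locally compact. Then G is proper (i.e. (r,s) : G → G⁽⁰⁾×G⁽⁰⁾ is a proper map) if and only if (r,s) is closed and each isotropy group G_x^x is quasi-compact, if and only if G_K^L = r^{-1}(L) ∩ s^{-1}(K) is quasi-compact for all quasi-compact K, L ⊆ G⁽⁰⁾, if and only if for all x, y there exist compact neighborhoods K_x of x and L_y of y with G_{K_x}^{L_y} quasi-compact. -/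
open Set Topology

section Aux

variable {G G0 : Type*} [TopologicalSpace G] [TopologicalSpace G0]

/-- Composition with a unit on the left, with a flexible unit argument. -/
lemma GroupoidStruct.comp_unit_left' (𝔾 : GroupoidStruct G G0) {x : G0} {g : G}
    (hx : x = 𝔾.r g) (pf : 𝔾.s (𝔾.unit x) = 𝔾.r g) :
    𝔾.comp (𝔾.unit x) g pf = g := by
  subst hx; exact 𝔾.comp_unit_left g

/-- `comp` only depends on the arrows, not on the proof; congruence in the first argument. -/
lemma GroupoidStruct.comp_congr_left (𝔾 : GroupoidStruct G G0) {a a' b : G} (ha : a = a')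
    (pf : 𝔾.s a = 𝔾.r b) (pf' : 𝔾.s a' = 𝔾.r b) :
    𝔾.comp a b pf = 𝔾.comp a' b pf' := by
  subst ha; rfl

/-- Cancellation: `g₀ (g₀⁻¹ g) = g`. -/
lemma GroupoidStruct.inv_cancel (𝔾 : GroupoidStruct G G0) {g0 g : G}
    (h : 𝔾.r g0 = 𝔾.r g) (pf1 : 𝔾.s (𝔾.inv g0) = 𝔾.r g)
    (pf2 : 𝔾.s g0 = 𝔾.r (𝔾.comp (𝔾.inv g0) g pf1)) :
    𝔾.comp g0 (𝔾.comp (𝔾.inv g0) g pf1) pf2 = g :=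
  calc 𝔾.comp g0 (𝔾.comp (𝔾.inv g0) g pf1) pf2
      = 𝔾.comp (𝔾.comp g0 (𝔾.inv g0) ((𝔾.r_inv g0).symm)) g
          ((𝔾.s_comp g0 (𝔾.inv g0) ((𝔾.r_inv g0).symm)).trans pf1) :=
        (𝔾.assoc g0 (𝔾.inv g0) g ((𝔾.r_inv g0).symm) pf1).symm
    _ = 𝔾.comp (𝔾.unit (𝔾.r g0)) g
          (by rw [𝔾.s_unit, h]) :=
        𝔾.comp_congr_left (𝔾.comp_inv_self g0) _ _
    _ = g := 𝔾.comp_unit_left' h _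

/-- Uniqueness of limits inside a Hausdorff subset. -/
lemma eq_of_le_nhds_of_t2_mem {X : Type*} [TopologicalSpace X] {L : Set X} (hT2 : T2Space L)
    {F : Filter X} [F.NeBot] {a b : X} (ha : a ∈ L) (hb : b ∈ L)
    (hFa : F ≤ nhds a) (hFb : F ≤ nhds b) (hL : L ∈ F) : a = b := by
  haveI : (F.comap (Subtype.val : L → X)).NeBot :=
    Filter.NeBot.comap_of_range_mem ‹_› (by rwa [Subtype.range_val])
  have h1 : Filter.Tendsto (id : L → L) (F.comap Subtype.val) (nhds ⟨a, ha⟩) := by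
    rw [Filter.tendsto_id', nhds_subtype_eq_comap]
    exact Filter.comap_mono hFa
  have h2 : Filter.Tendsto (id : L → L) (F.comap Subtype.val) (nhds ⟨b, hb⟩) := by
    rw [Filter.tendsto_id', nhds_subtype_eq_comap]
    exact Filter.comap_mono hFb
  have := tendsto_nhds_unique h1 h2
  exact congrArg Subtype.val this

end Aux

/-- Characterizations of properness for a topological groupoid whose unit space is
locally compact: `(r,s)` proper ↔ `(r,s)` closed with quasi-compact isotropy groups
↔ `G_K^L` quasi-compact for all quasi-compact `K, L` ↔ every pair of points has
compact neighborhoods `K_x`, `L_y` with `G_{K_x}^{L_y}` quasi-compact. -/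
theorem stmt5 {G G0 : Type*} [TopologicalSpace G] [TopologicalSpace G0]
    (𝔾 : GroupoidStruct G G0) (hG0 : LocCompact G0) :
    List.TFAE
      [IsProperMap (fun g => (𝔾.r g, 𝔾.s g)),
       IsClosedMap (fun g => (𝔾.r g, 𝔾.s g)) ∧
         ∀ x : G0, IsCompact {g : G | 𝔾.r g = x ∧ 𝔾.s g = x},
       ∀ K L : Set G0, IsCompact K → IsCompact L →
         IsCompact (𝔾.r ⁻¹' L ∩ 𝔾.s ⁻¹' K),
       ∀ x y : G0, ∃ K : Set G0, K ∈ nhds x ∧ IsCompact K ∧ T2Space K ∧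
         ∃ L : Set G0, L ∈ nhds y ∧ IsCompact L ∧ T2Space L ∧
           IsCompact (𝔾.r ⁻¹' L ∩ 𝔾.s ⁻¹' K)] := by
  have hcont : Continuous (fun g => (𝔾.r g, 𝔾.s g)) :=
    𝔾.continuous_r.prodMk 𝔾.continuous_s
  tfae_have 1 → 2
  | h1 => by
    obtain ⟨-, hclosed, hfib⟩ := isProperMap_iff_isClosedMap_and_compact_fibers.mp h1
    refine ⟨hclosed, fun x => ?_⟩
    convert hfib (x, x) using 1
    ext g; simp [Prod.ext_iff]
  tfae_have 2 → 1
  | ⟨hclosed, hiso⟩ => by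
    rw [isProperMap_iff_isClosedMap_and_compact_fibers]
    refine ⟨hcont, hclosed, fun p => ?_⟩
    obtain ⟨x, y⟩ := p
    by_cases hne : ((fun g => (𝔾.r g, 𝔾.s g)) ⁻¹' {(x, y)}).Nonempty
    · obtain ⟨g0, hg0⟩ := hne
      simp only [mem_preimage, mem_singleton_iff, Prod.mk.injEq] at hg0
      obtain ⟨hg0r, hg0s⟩ := hg0
      set S : Set G := {g : G | 𝔾.r g = y ∧ 𝔾.s g = y} with hSdef
      haveI : CompactSpace S := isCompact_iff_compactSpace.mp (hiso y)
      have hpf : ∀ h : S, 𝔾.s g0 = 𝔾.r (h : G) := fun h => by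
        rw [hg0s, h.2.1]
      let e : S → {p : G × G // 𝔾.s p.1 = 𝔾.r p.2} := fun h => ⟨(g0, (h : G)), hpf h⟩
      have he : Continuous e :=
        Continuous.subtype_mk (continuous_const.prodMk continuous_subtype_val) _
      let f : S → G := (fun p : {p : G × G // 𝔾.s p.1 = 𝔾.r p.2} => 𝔾.comp p.1.1 p.1.2 p.2) ∘ e
      have hfc : Continuous f := 𝔾.continuous_comp.comp he
      have hrange : (fun g => (𝔾.r g, 𝔾.s g)) ⁻¹' {(x, y)} = Set.range f := by
        ext g
        simp only [mem_preimage, mem_singleton_iff, Prod.mk.injEq, mem_range]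
        constructor
        · rintro ⟨hgr, hgs⟩
          have pf1 : 𝔾.s (𝔾.inv g0) = 𝔾.r g := by rw [𝔾.s_inv, hg0r, hgr]
          refine ⟨⟨𝔾.comp (𝔾.inv g0) g pf1, ?_, ?_⟩, ?_⟩
          · rw [𝔾.r_comp, 𝔾.r_inv, hg0s]
          · rw [𝔾.s_comp, hgs]
          · exact 𝔾.inv_cancel (hg0r.trans hgr.symm) pf1 _
        · rintro ⟨h, rfl⟩
          constructor
          · show 𝔾.r (𝔾.comp g0 (h : G) (hpf h)) = x
            rw [𝔾.r_comp, hg0r]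
          · show 𝔾.s (𝔾.comp g0 (h : G) (hpf h)) = y
            rw [𝔾.s_comp, h.2.2]
      rw [hrange]
      exact isCompact_range hfc
    · rw [not_nonempty_iff_eq_empty] at hne
      rw [hne]; exact isCompact_empty
  tfae_have 1 → 3
  | h1 => by
    intro K L hK hL
    exact h1.isCompact_preimage (hL.prod hK)
  tfae_have 3 → 4
  | h3 => by
    intro x y
    obtain ⟨K, hKx, hKc, hKt2⟩ := hG0 x
    obtain ⟨L, hLy, hLc, hLt2⟩ := hG0 y
    exact ⟨K, hKx, hKc, hKt2, L, hLy, hLc, hLt2, h3 K L hKc hLc⟩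
  tfae_have 4 → 1
  | h4 => by
    rw [isProperMap_iff_ultrafilter]
    refine ⟨hcont, fun 𝒰 p hp => ?_⟩
    obtain ⟨y, x⟩ := p
    obtain ⟨K, hKx, hKc, hKt2, L, hLy, hLc, hLt2, hC⟩ := h4 x y
    have hmem : 𝔾.r ⁻¹' L ∩ 𝔾.s ⁻¹' K ∈ 𝒰 := by
      have : L ×ˢ K ∈ nhds (y, x) := prod_mem_nhds hLy hKx
      exact hp this
    obtain ⟨g, hgC, hg𝒰⟩ := hC.ultrafilter_le_nhds' 𝒰 hmem
    have hrL : 𝔾.r g ∈ L := hgC.1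
    have hsK : 𝔾.s g ∈ K := hgC.2
    have hr𝒰 : (𝒰 : Filter G).map 𝔾.r ≤ nhds (𝔾.r g) :=
      (𝔾.continuous_r.tendsto g).mono_left hg𝒰
    have hs𝒰 : (𝒰 : Filter G).map 𝔾.s ≤ nhds (𝔾.s g) :=
      (𝔾.continuous_s.tendsto g).mono_left hg𝒰
    have hry : (𝒰 : Filter G).map 𝔾.r ≤ nhds y :=
      ((continuous_fst.tendsto (y, x)).comp hp :)
    have hsx : (𝒰 : Filter G).map 𝔾.s ≤ nhds x :=
      ((continuous_snd.tendsto (y, x)).comp hp :)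
    have hLmem : L ∈ (𝒰 : Filter G).map 𝔾.r :=
      Filter.mem_map.mpr (Filter.mem_of_superset hmem Set.inter_subset_left)
    have hKmem : K ∈ (𝒰 : Filter G).map 𝔾.s :=
      Filter.mem_map.mpr (Filter.mem_of_superset hmem Set.inter_subset_right)
    have h1 : 𝔾.r g = y :=
      eq_of_le_nhds_of_t2_mem hLt2 hrL (mem_of_mem_nhds hLy) hr𝒰 hry hLmem
    have h2 : 𝔾.s g = x :=
      eq_of_le_nhds_of_t2_mem hKt2 hsK (mem_of_mem_nhds hKx) hs𝒰 hsx hKmem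
    exact ⟨g, by rw [h1, h2], hg𝒰⟩
  tfae_finish
end

section
/- Let G be a topological groupoid with G⁽⁰⁾ locally compact and r : G → G⁽⁰⁾ open, and suppose the image R = (r,s)(G) ⊆ G⁽⁰⁾ × G⁽⁰⁾ is locally closed. Then the orbit space G⁽⁰⁾/G is locally compact. If moreover R is closed (for instance if G is proper), then G⁽⁰⁾/G is Hausdorff; and if G⁽⁰⁾ is σ-compact, then G⁽⁰⁾/G is σ-compact. -/
open Set Topology

/-- The orbit equivalence on the unit space: two units are related if there is an
arrow from one to the other. -/
def orbitRel {G G0 : Type*} [TopologicalSpace G] [TopologicalSpace G0]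
    (𝔾 : GroupoidStruct G G0) : G0 → G0 → Prop :=
  fun x y => ∃ g : G, 𝔾.r g = x ∧ 𝔾.s g = y

section Aux

variable {G G0 : Type*} [TopologicalSpace G] [TopologicalSpace G0]

/-- The orbit relation is an equivalence relation. -/
lemma orbitRel_equivalence (𝔾 : GroupoidStruct G G0) : Equivalence (orbitRel 𝔾) where
  refl x := ⟨𝔾.unit x, 𝔾.r_unit x, 𝔾.s_unit x⟩
  symm := by
    rintro x y ⟨g, rfl, rfl⟩
    exact ⟨𝔾.inv g, 𝔾.r_inv g, 𝔾.s_inv g⟩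
  trans := by
    rintro x y z ⟨g, rfl, rfl⟩ ⟨h, hh, rfl⟩
    exact ⟨𝔾.comp g h hh.symm, 𝔾.r_comp g h hh.symm, 𝔾.s_comp g h hh.symm⟩

lemma quot_mk_eq_iff (𝔾 : GroupoidStruct G G0) {a b : G0} :
    Quot.mk (orbitRel 𝔾) a = Quot.mk (orbitRel 𝔾) b ↔ orbitRel 𝔾 a b := by
  constructor
  · intro h
    exact ((orbitRel_equivalence 𝔾).eqvGen_iff).mp (Quot.eqvGen_exact h)
  · exact Quot.sound

lemma mem_graph_iff (𝔾 : GroupoidStruct G G0) {u v : G0} :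
    (u, v) ∈ Set.range (fun g => (𝔾.r g, 𝔾.s g)) ↔ orbitRel 𝔾 u v := by
  constructor
  · rintro ⟨g, hg⟩
    exact ⟨g, congrArg Prod.fst hg, congrArg Prod.snd hg⟩
  · rintro ⟨g, h1, h2⟩
    exact ⟨g, by simp [h1, h2]⟩

/-- The quotient map onto the orbit space is open. -/
lemma isOpenMap_orbit_quot (𝔾 : GroupoidStruct G G0) (hr : IsOpenMap 𝔾.r) :
    IsOpenMap (Quot.mk (orbitRel 𝔾)) := by
  intro V hV
  rw [← isQuotientMap_quot_mk.isOpen_preimage]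
  have : Quot.mk (orbitRel 𝔾) ⁻¹' (Quot.mk (orbitRel 𝔾) '' V) = 𝔾.r '' (𝔾.s ⁻¹' V) := by
    ext y
    constructor
    · rintro ⟨x, hxV, hxy⟩
      obtain ⟨g, rfl, rfl⟩ := (quot_mk_eq_iff 𝔾).mp hxy
      exact ⟨𝔾.inv g, by simpa [𝔾.s_inv] using hxV, 𝔾.r_inv g⟩
    · rintro ⟨g, hgV, rfl⟩
      exact ⟨𝔾.s g, hgV, Quot.sound ⟨𝔾.inv g, 𝔾.r_inv g, 𝔾.s_inv g⟩⟩
  rw [this]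
  exact hr _ (hV.preimage 𝔾.continuous_s)

/-- Images of non-related open sets under the open quotient map are disjoint. -/
lemma disjoint_images (𝔾 : GroupoidStruct G G0) {A B : Set G0}
    (h : ∀ a ∈ A, ∀ b ∈ B, ¬ orbitRel 𝔾 a b) :
    Disjoint (Quot.mk (orbitRel 𝔾) '' A) (Quot.mk (orbitRel 𝔾) '' B) := by
  rw [Set.disjoint_left]
  rintro p ⟨a, haA, rfl⟩ ⟨b, hbB, hba⟩
  exact h a haA b hbB ((quot_mk_eq_iff 𝔾).mp hba.symm)

/-- A subset of a topological space such that any two points are separated by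
disjoint ambient open sets is Hausdorff. -/
lemma t2_of_sep {Y : Type*} [TopologicalSpace Y] {S : Set Y}
    (h : ∀ p ∈ S, ∀ q ∈ S, p ≠ q → ∃ A B : Set Y,
      IsOpen A ∧ IsOpen B ∧ p ∈ A ∧ q ∈ B ∧ Disjoint A B) : T2Space S := by
  constructor
  rintro ⟨p, hp⟩ ⟨q, hq⟩ hne
  obtain ⟨A, B, hA, hB, hpA, hqB, hd⟩ := h p hp q hq (by simpa [Subtype.ext_iff] using hne)
  exact ⟨Subtype.val ⁻¹' A, Subtype.val ⁻¹' B, hA.preimage continuous_subtype_val,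
    hB.preimage continuous_subtype_val, hpA, hqB, hd.preimage _⟩

/-- Shrinking a compact Hausdorff neighborhood inside an open set. -/
lemma shrink_nbhd {X : Type*} [TopologicalSpace X] {x : X} {K V : Set X}
    (hK : K ∈ nhds x) (hKc : IsCompact K) (hKt2 : T2Space K)
    (hV : IsOpen V) (hxV : x ∈ V) :
    ∃ K' : Set X, K' ∈ nhds x ∧ IsCompact K' ∧ T2Space K' ∧ K' ⊆ V := by
  have hxK : x ∈ K := mem_of_mem_nhds hK
  haveI : CompactSpace K := isCompact_iff_compactSpace.mp hKc
  haveI : LocallyCompactSpace K := inferInstance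
  set xK : K := ⟨x, hxK⟩
  have hVK : (Subtype.val ⁻¹' V : Set K) ∈ nhds xK := by
    rw [nhds_subtype_eq_comap]
    exact Filter.preimage_mem_comap (hV.mem_nhds hxV)
  obtain ⟨K'', hK''n, hK''sub, hK''c⟩ := local_compact_nhds hVK
  refine ⟨Subtype.val '' K'', ?_, hK''c.image continuous_subtype_val, ?_, ?_⟩
  · rw [nhds_subtype_eq_comap] at hK''n
    obtain ⟨W, hW, hWsub⟩ := hK''n
    refine Filter.mem_of_superset (Filter.inter_mem hW hK) ?_
    rintro w ⟨hwW, hwK⟩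
    exact ⟨⟨w, hwK⟩, hWsub hwW, rfl⟩
  · have hsub : Subtype.val '' K'' ⊆ K := by rintro _ ⟨⟨a, ha⟩, _, rfl⟩; exact ha
    exact (IsEmbedding.inclusion hsub).t2Space
  · rintro _ ⟨a, ha, rfl⟩
    exact hK''sub ha

end Aux

/-- If `G0` is locally compact, the range map is open, and the image
`R = (r,s)(G)` is locally closed, then the orbit space `G0/G` is locally compact;
if `R` is closed it is Hausdorff; and if `G0` is σ-compact so is `G0/G`. -/
theorem stmt7 {G G0 : Type*} [TopologicalSpace G] [TopologicalSpace G0]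
    (𝔾 : GroupoidStruct G G0) (hG0 : LocCompact G0) (hr : IsOpenMap 𝔾.r)
    (hR : IsLocallyClosed (Set.range (fun g => (𝔾.r g, 𝔾.s g)))) :
    LocCompact (Quot (orbitRel 𝔾)) ∧
    (IsClosed (Set.range (fun g => (𝔾.r g, 𝔾.s g))) → T2Space (Quot (orbitRel 𝔾))) ∧
    ((∃ K : ℕ → Set G0, (∀ n, IsCompact (K n)) ∧ ⋃ n, K n = univ) →
      ∃ K : ℕ → Set (Quot (orbitRel 𝔾)), (∀ n, IsCompact (K n)) ∧ ⋃ n, K n = univ) := by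
  have hopen := isOpenMap_orbit_quot 𝔾 hr
  refine ⟨?_, ?_, ?_⟩
  · -- local compactness
    intro p
    obtain ⟨x, rfl⟩ := Quot.exists_rep p
    obtain ⟨K, hKn, hKc, hKt2⟩ := hG0 x
    obtain ⟨U, Z, hUo, hZc, hUZ⟩ := hR
    have hxxU : (x, x) ∈ U := by
      have : (x, x) ∈ Set.range (fun g => (𝔾.r g, 𝔾.s g)) :=
        (mem_graph_iff 𝔾).mpr ((orbitRel_equivalence 𝔾).refl x)
      rw [hUZ] at this
      exact this.1
    obtain ⟨V1, V2, hV1, hV2, hx1, hx2, hVU⟩ := isOpen_prod_iff.mp hUo x x hxxU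
    obtain ⟨K', hK'n, hK'c, hK't2, hK'V⟩ :=
      shrink_nbhd hKn hKc hKt2 (hV1.inter hV2) ⟨hx1, hx2⟩
    refine ⟨Quot.mk (orbitRel 𝔾) '' K', ?_, hK'c.image continuous_quot_mk, ?_⟩
    · refine Filter.mem_of_superset
        (((hopen _ isOpen_interior).mem_nhds ?_)) (Set.image_mono interior_subset)
      exact ⟨x, mem_interior_iff_mem_nhds.mpr hK'n, rfl⟩
    · apply t2_of_sep
      rintro p ⟨a, haK', rfl⟩ q ⟨b, hbK', rfl⟩ hne
      have hab : ¬ orbitRel 𝔾 a b := fun h => hne (Quot.sound h)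
      have habUZ : (a, b) ∈ U ∩ Zᶜ := by
        refine ⟨hVU ⟨(hK'V haK').1, (hK'V hbK').2⟩, fun hz => hab ?_⟩
        refine (mem_graph_iff 𝔾).mp ?_
        rw [hUZ]
        exact ⟨hVU ⟨(hK'V haK').1, (hK'V hbK').2⟩, hz⟩
      obtain ⟨A, B, hA, hB, haA, hbB, hABsub⟩ :=
        isOpen_prod_iff.mp (hUo.inter hZc.isOpen_compl) a b habUZ
      refine ⟨_, _, hopen A hA, hopen B hB, ⟨a, haA, rfl⟩, ⟨b, hbB, rfl⟩,
        disjoint_images 𝔾 ?_⟩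
      intro a' ha' b' hb' hrel
      have h1 : (a', b') ∈ U ∩ Zᶜ := hABsub ⟨ha', hb'⟩
      have h2 : (a', b') ∈ U ∩ Z := by
        rw [← hUZ]
        exact (mem_graph_iff 𝔾).mpr hrel
      exact h1.2 h2.2
  · intro hclosed
    refine ⟨fun p q hne => ?_⟩
    obtain ⟨a, rfl⟩ := Quot.exists_rep p
    obtain ⟨b, rfl⟩ := Quot.exists_rep q
    have hab : (a, b) ∉ Set.range (fun g => (𝔾.r g, 𝔾.s g)) :=
      fun h => hne (Quot.sound ((mem_graph_iff 𝔾).mp h))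
    obtain ⟨A, B, hA, hB, haA, hbB, hsub⟩ :=
      isOpen_prod_iff.mp hclosed.isOpen_compl a b hab
    refine ⟨_, _, hopen A hA, hopen B hB, ⟨a, haA, rfl⟩, ⟨b, hbB, rfl⟩,
      disjoint_images 𝔾 ?_⟩
    intro a' ha' b' hb' hrel
    exact hsub ⟨ha', hb'⟩ ((mem_graph_iff 𝔾).mpr hrel)
  · rintro ⟨K, hKc, hKu⟩
    refine ⟨fun n => Quot.mk (orbitRel 𝔾) '' K n,
      fun n => (hKc n).image continuous_quot_mk, ?_⟩
    rw [← Set.image_iUnion, hKu, Set.image_univ]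
    exact Set.range_eq_univ.mpr (Quot.mk_surjective)
end

section
/- Let G be a locally compact topological groupoid. Then G acts properly on itself (by right translation) if and only if G⁽⁰⁾ is Hausdorff. In particular, a locally compact topological space, viewed as a groupoid consisting only of units, is a proper groupoid if and only if it is Hausdorff. -/
open Set Topology

/-- A locally compact groupoid acts properly on itself (equivalently, the fibered
product `G ×_{r,r} G` is closed in `G × G`) if and only if its unit space is
Hausdorff.  In particular, a locally compact space, viewed as a groupoid of units
(whose `(r,s)` map is the diagonal), is proper iff it is Hausdorff. -/
theorem stmt8 {G G0 : Type*} [TopologicalSpace G] [TopologicalSpace G0]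
    (𝔾 : GroupoidStruct G G0) (hG : LocCompact G) :
    (IsClosed {p : G × G | 𝔾.r p.1 = 𝔾.r p.2} ↔ T2Space G0) ∧
    (∀ (X : Type) [TopologicalSpace X], LocCompact X →
      (IsProperMap (fun x : X => (x, x)) ↔ T2Space X)) := by
  constructor
  · constructor
    · intro hcl
      refine ⟨fun x y hxy => ?_⟩
      have hmem : (𝔾.unit x, 𝔾.unit y) ∈ {p : G × G | 𝔾.r p.1 = 𝔾.r p.2}ᶜ := by
        simp [𝔾.r_unit, hxy]
      obtain ⟨U, V, hU, hV, hxU, hyV, hUV⟩ :=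
        isOpen_prod_iff.1 hcl.isOpen_compl _ _ hmem
      refine ⟨𝔾.unit ⁻¹' U, 𝔾.unit ⁻¹' V, hU.preimage 𝔾.continuous_unit,
        hV.preimage 𝔾.continuous_unit, hxU, hyV, ?_⟩
      rw [Set.disjoint_left]
      intro z hzU hzV
      exact hUV (Set.mk_mem_prod hzU hzV) rfl
    · intro _
      exact isClosed_diagonal.preimage ((𝔾.continuous_r.comp continuous_fst).prodMk
        (𝔾.continuous_r.comp continuous_snd))
  · intro X _ _
    constructor
    · intro hp
      have h := hp.isClosedMap.isClosed_range
      rw [show Set.range (fun x : X => (x, x)) = Set.diagonal X by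
        ext p; simp [Set.diagonal, eq_comm, Prod.ext_iff]] at h
      exact t2_iff_isClosed_diagonal.2 h
    · intro ht
      have hemb : Topology.IsEmbedding (fun x : X => (x, x)) :=
        Topology.IsEmbedding.of_comp (continuous_id.prodMk continuous_id)
          continuous_fst Topology.IsEmbedding.id
      have hrange : IsClosed (Set.range (fun x : X => (x, x))) := by
        rw [show Set.range (fun x : X => (x, x)) = Set.diagonal X by
          ext p; simp [Set.diagonal, eq_comm, Prod.ext_iff]]
        exact isClosed_diagonal
      exact (Topology.IsClosedEmbedding.mk hemb hrange).isProperMap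
end

section
/- Let G₁ and G₂ be topological groupoids with G₁⁽⁰⁾ Hausdorff and G₂ proper. If f : G₁ → G₂ is a proper continuous groupoid morphism, then G₁ is proper. -/
open Set Topology

/-
Write `ρᵢ = (rᵢ, sᵢ)`. The morphism gives the commutative square `(F₀ × F₀) ∘ ρ₁ = ρ₂ ∘ F`,
whose right-hand side is a composite of proper maps, hence proper. Since `F₀ × F₀` is continuous
and `ρ₁` is continuous with Hausdorff codomain `G₁⁽⁰⁾ × G₁⁽⁰⁾`, properness descends to `ρ₁`.
-/

namespace GroupoidStruct

variable {G G0 : Type*} [TopologicalSpace G] [TopologicalSpace G0]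

theorem continuous_range_source (𝔾 : GroupoidStruct G G0) :
    Continuous fun g => (𝔾.r g, 𝔾.s g) :=
  𝔾.continuous_r.prodMk 𝔾.continuous_s

/-- The map on unit spaces is recovered from the arrow map as `F₀ = s₂ ∘ F ∘ unit₁`. -/
theorem continuous_unitSpaceMap {H H0 : Type*} [TopologicalSpace H] [TopologicalSpace H0]
    (𝔾 : GroupoidStruct G G0) (ℍ : GroupoidStruct H H0) {F : G → H} {F0 : G0 → H0}
    (hs : ∀ g, ℍ.s (F g) = F0 (𝔾.s g)) (hF : Continuous F) : Continuous F0 := by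
  have hF0 : F0 = fun x => ℍ.s (F (𝔾.unit x)) := by
    funext x
    rw [hs, 𝔾.s_unit]
  rw [hF0]
  exact ℍ.continuous_s.comp (hF.comp 𝔾.continuous_unit)

end GroupoidStruct

theorem stmt9_general {G1 G10 G2 G20 : Type*} [TopologicalSpace G1] [TopologicalSpace G10]
    [TopologicalSpace G2] [TopologicalSpace G20]
    (𝔾₁ : GroupoidStruct G1 G10) (𝔾₂ : GroupoidStruct G2 G20)
    [T2Space G10]
    (hprop2 : IsProperMap (fun g => (𝔾₂.r g, 𝔾₂.s g)))
    (F : G1 → G2) (F0 : G10 → G20)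
    (hr : ∀ g, 𝔾₂.r (F g) = F0 (𝔾₁.r g)) (hs : ∀ g, 𝔾₂.s (F g) = F0 (𝔾₁.s g))
    (hF : IsProperMap F) :
    IsProperMap (fun g => (𝔾₁.r g, 𝔾₁.s g)) := by
  have hF0 : Continuous F0 := 𝔾₁.continuous_unitSpaceMap 𝔾₂ hs hF.continuous
  have hsquare : Prod.map F0 F0 ∘ (fun g => (𝔾₁.r g, 𝔾₁.s g)) =
      (fun g => (𝔾₂.r g, 𝔾₂.s g)) ∘ F := by
    funext g
    simp [hr, hs]
  refine isProperMap_of_comp_of_t2 𝔾₁.continuous_range_source (hF0.prodMap hF0) ?_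
  rw [hsquare]
  exact hprop2.comp hF

/-- If `G₁` has Hausdorff unit space, `G₂` is proper, and `f : G₁ → G₂` is a proper
continuous groupoid morphism, then `G₁` is proper. -/
theorem stmt9 {G1 G10 G2 G20 : Type*} [TopologicalSpace G1] [TopologicalSpace G10]
    [TopologicalSpace G2] [TopologicalSpace G20]
    (𝔾₁ : GroupoidStruct G1 G10) (𝔾₂ : GroupoidStruct G2 G20)
    [T2Space G10]
    (hprop2 : IsProperMap (fun g => (𝔾₂.r g, 𝔾₂.s g)))
    (F : G1 → G2) (F0 : G10 → G20)
    (hr : ∀ g, 𝔾₂.r (F g) = F0 (𝔾₁.r g)) (hs : ∀ g, 𝔾₂.s (F g) = F0 (𝔾₁.s g))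
    (hunit : ∀ x, F (𝔾₁.unit x) = 𝔾₂.unit (F0 x))
    (hcomp : ∀ g h (hgh : 𝔾₁.s g = 𝔾₁.r h),
      F (𝔾₁.comp g h hgh) =
        𝔾₂.comp (F g) (F h) (((hs g).trans (congrArg F0 hgh)).trans (hr h).symm))
    (hF : IsProperMap F) :
    IsProperMap (fun g => (𝔾₁.r g, 𝔾₁.s g)) :=
  stmt9_general 𝔾₁ 𝔾₂ hprop2 F F0 hr hs hF
end

section
/- Let G₁ and G₂ be topological groupoids with G₁ proper, and let f : G₁ → G₂ be a surjective continuous groupoid morphism such that the induced map f' : G₁⁽⁰⁾ → G₂⁽⁰⁾ on unit spaces is proper. Then G₂ is proper. -/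
open Set Topology

theorem stmt10_general {G1 G10 G2 G20 : Type*} [TopologicalSpace G1] [TopologicalSpace G10]
    [TopologicalSpace G2] [TopologicalSpace G20]
    (𝔾₁ : GroupoidStruct G1 G10) (𝔾₂ : GroupoidStruct G2 G20)
    (hprop1 : IsProperMap (fun g => (𝔾₁.r g, 𝔾₁.s g)))
    (F : G1 → G2) (F0 : G10 → G20) (hFc : Continuous F)
    (hr : ∀ g, 𝔾₂.r (F g) = F0 (𝔾₁.r g)) (hs : ∀ g, 𝔾₂.s (F g) = F0 (𝔾₁.s g))
    (hFsurj : Function.Surjective F)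
    (hF0 : IsProperMap F0) :
    IsProperMap (fun g => (𝔾₂.r g, 𝔾₂.s g)) := by
  have hanchor : (fun g => (𝔾₂.r g, 𝔾₂.s g)) ∘ F =
      Prod.map F0 F0 ∘ fun g => (𝔾₁.r g, 𝔾₁.s g) :=
    funext fun g => Prod.ext (hr g) (hs g)
  have hcomp_proper : IsProperMap ((fun g => (𝔾₂.r g, 𝔾₂.s g)) ∘ F) :=
    hanchor ▸ (hF0.prodMap hF0).comp hprop1
  exact isProperMap_of_comp_of_surj hFc (𝔾₂.continuous_r.prodMk 𝔾₂.continuous_s)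
    hcomp_proper hFsurj

/-- If `G₁` is proper and `f : G₁ → G₂` is a surjective continuous groupoid morphism
whose induced map on unit spaces is proper, then `G₂` is proper. -/
theorem stmt10 {G1 G10 G2 G20 : Type*} [TopologicalSpace G1] [TopologicalSpace G10]
    [TopologicalSpace G2] [TopologicalSpace G20]
    (𝔾₁ : GroupoidStruct G1 G10) (𝔾₂ : GroupoidStruct G2 G20)
    (hprop1 : IsProperMap (fun g => (𝔾₁.r g, 𝔾₁.s g)))
    (F : G1 → G2) (F0 : G10 → G20) (hFc : Continuous F)
    (hr : ∀ g, 𝔾₂.r (F g) = F0 (𝔾₁.r g)) (hs : ∀ g, 𝔾₂.s (F g) = F0 (𝔾₁.s g))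
    (hunit : ∀ x, F (𝔾₁.unit x) = 𝔾₂.unit (F0 x))
    (hcomp : ∀ g h (hgh : 𝔾₁.s g = 𝔾₁.r h),
      F (𝔾₁.comp g h hgh) =
        𝔾₂.comp (F g) (F h) (((hs g).trans (congrArg F0 hgh)).trans (hr h).symm))
    (hFsurj : Function.Surjective F)
    (hF0 : IsProperMap F0) :
    IsProperMap (fun g => (𝔾₂.r g, 𝔾₂.s g)) :=
  stmt10_general 𝔾₁ 𝔾₂ hprop1 F F0 hFc hr hs hFsurj hF0
end

section
/- Let G be a topological groupoid whose range map is open, and let f : Y → Z be a proper G-equivariant continuous map between two G-spaces. Then the induced map on orbit spaces Y/G → Z/G is proper. -/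
open Set Topology

/-- A continuous (right) action of the topological groupoid `𝔾` on a space `Z`:
a momentum map `p : Z → G0` and a partial action map, continuous on the fibered
product, satisfying the usual axioms. -/
structure GroupoidAction {G G0 : Type*} [TopologicalSpace G] [TopologicalSpace G0]
    (𝔾 : GroupoidStruct G G0) (Z : Type*) [TopologicalSpace Z] where
  p : Z → G0
  act : (z : Z) → (g : G) → p z = 𝔾.r g → Z
  p_act : ∀ z g h, p (act z g h) = 𝔾.s g
  act_unit : ∀ z, act z (𝔾.unit (p z)) ((𝔾.r_unit (p z)).symm) = z
  act_comp : ∀ z g h (hz : p z = 𝔾.r g) (hgh : 𝔾.s g = 𝔾.r h),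
    act (act z g hz) h ((p_act z g hz).trans hgh) =
      act z (𝔾.comp g h hgh) (hz.trans (𝔾.r_comp g h hgh).symm)
  continuous_p : Continuous p
  continuous_act :
    Continuous (fun q : {q : Z × G // p q.1 = 𝔾.r q.2} => act q.1.1 q.1.2 q.2)

/-- The orbit relation of an action: `z` is related to `z'` if some arrow moves
`z` to `z'`. -/
def actOrbitRel {G G0 Z : Type*} [TopologicalSpace G] [TopologicalSpace G0]
    [TopologicalSpace Z] {𝔾 : GroupoidStruct G G0} (A : GroupoidAction 𝔾 Z) :
    Z → Z → Prop :=
  fun z z' => ∃ (g : G) (h : A.p z = 𝔾.r g), A.act z g h = z'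

section Aux

variable {G G0 X : Type*} [TopologicalSpace G] [TopologicalSpace G0]
  [TopologicalSpace X] {𝔾 : GroupoidStruct G G0} (A : GroupoidAction 𝔾 X)

theorem act_congr (z : X) (g g' : G) (hg : g = g') (h : A.p z = 𝔾.r g)
    (h' : A.p z = 𝔾.r g') : A.act z g h = A.act z g' h' := by subst hg; rfl

theorem act_unit' (z : X) (x : G0) (hx : A.p z = x) (h : A.p z = 𝔾.r (𝔾.unit x)) :
    A.act z (𝔾.unit x) h = z := by
  subst hx; exact A.act_unit z

theorem actOrbitRel_equivalence : Equivalence (actOrbitRel A) := by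
  constructor
  · intro z
    exact ⟨𝔾.unit (A.p z), (𝔾.r_unit (A.p z)).symm, A.act_unit z⟩
  · rintro z z' ⟨g, h, rfl⟩
    refine ⟨𝔾.inv g, ?_, ?_⟩
    · rw [A.p_act, 𝔾.r_inv]
    · rw [A.act_comp z g (𝔾.inv g) h (𝔾.r_inv g).symm,
        act_congr A z _ (𝔾.unit (𝔾.r g)) (𝔾.comp_inv_self g) _
          (by rw [h, 𝔾.r_unit]),
        act_unit' A z (𝔾.r g) h]
  · rintro z z' z'' ⟨g, h, rfl⟩ ⟨g', h', rfl⟩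
    have hs : 𝔾.s g = 𝔾.r g' := by rw [← A.p_act z g h, h']
    refine ⟨𝔾.comp g g' hs, by rw [h, 𝔾.r_comp], ?_⟩
    rw [← A.act_comp z g g' h hs]

theorem quot_mk_eq_iff_s12 (a b : X) :
    Quot.mk (actOrbitRel A) a = Quot.mk (actOrbitRel A) b ↔ actOrbitRel A a b := by
  rw [Quot.eq, (actOrbitRel_equivalence A).eqvGen_iff]

theorem isOpenMap_fst_fiber :
    IsOpenMap (fun q : {q : X × G // A.p q.1 = 𝔾.r q.2} => q.1.1) → True := fun _ => trivial

theorem isOpenMap_pi1 (hr : IsOpenMap 𝔾.r) :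
    IsOpenMap (fun q : {q : X × G // A.p q.1 = 𝔾.r q.2} => q.1.1) := by
  intro W hW
  obtain ⟨O, hO, rfl⟩ := isOpen_induced_iff.mp hW
  rw [isOpen_iff_forall_mem_open]
  rintro y ⟨⟨⟨y', g⟩, hq⟩, hqW, rfl⟩
  obtain ⟨U, V, hU, hV, hyU, hgV, hUV⟩ := isOpen_prod_iff.mp hO _ _ hqW
  refine ⟨U ∩ A.p ⁻¹' (𝔾.r '' V), ?_, (hU.inter ((hr V hV).preimage A.continuous_p)),
    ⟨hyU, ⟨g, hgV, hq.symm⟩⟩⟩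
  rintro x ⟨hxU, g', hg'V, hg'⟩
  exact ⟨⟨(x, g'), hg'.symm⟩, hUV ⟨hxU, hg'V⟩, rfl⟩

theorem isOpenMap_quot_mk_act (hr : IsOpenMap 𝔾.r) :
    IsOpenMap (Quot.mk (actOrbitRel A)) := by
  intro U hU
  rw [← isQuotientMap_quot_mk.isOpen_preimage]
  have key : Quot.mk (actOrbitRel A) ⁻¹' (Quot.mk (actOrbitRel A) '' U) =
      (fun q : {q : X × G // A.p q.1 = 𝔾.r q.2} => q.1.1) ''
        ((fun q : {q : X × G // A.p q.1 = 𝔾.r q.2} => A.act q.1.1 q.1.2 q.2) ⁻¹' U) := by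
    ext y
    constructor
    · rintro ⟨u, huU, hu⟩
      obtain ⟨g, h, hact⟩ := (actOrbitRel_equivalence A).symm
        ((quot_mk_eq_iff_s12 A u y).mp hu)
      exact ⟨⟨(y, g), h⟩, by simpa [hact] using huU, rfl⟩
    · rintro ⟨⟨⟨y', g⟩, hq⟩, hmem, rfl⟩
      exact ⟨_, hmem, ((quot_mk_eq_iff_s12 A _ _).mpr
        ((actOrbitRel_equivalence A).symm ⟨g, hq, rfl⟩))⟩
  rw [key]
  exact isOpenMap_pi1 A hr _ (hU.preimage A.continuous_act)

end Aux

/-- If the range map of `𝔾` is open and `f : Y → Z` is a proper `𝔾`-equivariant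
continuous map of `𝔾`-spaces, then the induced map `Y/𝔾 → Z/𝔾` on orbit spaces is
proper. -/
theorem stmt12 {G G0 Y Z : Type*} [TopologicalSpace G] [TopologicalSpace G0]
    [TopologicalSpace Y] [TopologicalSpace Z]
    (𝔾 : GroupoidStruct G G0) (hr : IsOpenMap 𝔾.r)
    (A : GroupoidAction 𝔾 Y) (B : GroupoidAction 𝔾 Z)
    (f : Y → Z) (hf : IsProperMap f)
    (hp : ∀ y, B.p (f y) = A.p y)
    (hequiv : ∀ y g (h : A.p y = 𝔾.r g),
      f (A.act y g h) = B.act (f y) g ((hp y).trans h)) :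
    ∀ fbar : Quot (actOrbitRel A) → Quot (actOrbitRel B),
      (∀ y, fbar (Quot.mk _ y) = Quot.mk _ (f y)) → IsProperMap fbar := by
  intro fbar hfbar
  have hqY : IsQuotientMap (Quot.mk (actOrbitRel A)) := isQuotientMap_quot_mk
  have hcont : Continuous fbar := by
    rw [hqY.continuous_iff]
    have : fbar ∘ Quot.mk (actOrbitRel A) = Quot.mk (actOrbitRel B) ∘ f := by
      funext y; exact hfbar y
    rw [this]
    exact continuous_quot_mk.comp hf.continuous
  rw [isProperMap_iff_isClosedMap_ultrafilter]
  refine ⟨hcont, ?_⟩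
  set W := Ultrafilter (Quot (actOrbitRel A))
  intro C hC
  set D : Set (Y × W) := Prod.map (Quot.mk (actOrbitRel A)) id ⁻¹' C with hDdef
  have hD : IsClosed D := hC.preimage ((continuous_quot_mk.comp continuous_fst).prodMk
    continuous_snd)
  have hE : IsClosed (Prod.map f id '' D) := (hf.universally_closed W) D hD
  have hqZ : IsQuotientMap (Prod.map (Quot.mk (actOrbitRel B)) (id : W → W)) :=
    ((isOpenMap_quot_mk_act B hr).prodMap IsOpenMap.id).isQuotientMap
      (continuous_quot_mk.prodMap continuous_id)
      ((Quot.mk_surjective).prodMap Function.surjective_id)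
  rw [← hqZ.isClosed_preimage]
  have key : Prod.map (Quot.mk (actOrbitRel B)) (id : W → W) ⁻¹' (Prod.map fbar id '' C) =
      Prod.map f id '' D := by
    ext ⟨z, w⟩
    constructor
    · rintro ⟨⟨a, w'⟩, haC, ha⟩
      obtain ⟨y, rfl⟩ := Quot.mk_surjective a
      simp only [Prod.map, Prod.mk.injEq] at ha
      obtain ⟨ha1, rfl⟩ := ha
      rw [hfbar y] at ha1
      obtain ⟨g, h, hact⟩ := (quot_mk_eq_iff_s12 B _ _).mp ha1
      have h' : A.p y = 𝔾.r g := (hp y).symm.trans h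
      refine ⟨(A.act y g h', w'), ?_, ?_⟩
      · have : Quot.mk (actOrbitRel A) (A.act y g h') = Quot.mk (actOrbitRel A) y :=
          (quot_mk_eq_iff_s12 A _ _).mpr ((actOrbitRel_equivalence A).symm ⟨g, h', rfl⟩)
        simpa [hDdef, Prod.map, this] using haC
      · have : f (A.act y g h') = z := by rw [hequiv y g h']; rw [← hact]
        simp [Prod.map, this]
    · rintro ⟨⟨y, w'⟩, hyD, hy⟩
      simp only [Prod.map, Prod.mk.injEq, id] at hy
      obtain ⟨rfl, rfl⟩ := hy
      refine ⟨(Quot.mk (actOrbitRel A) y, w'), hyD, ?_⟩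
      simp [Prod.map, hfbar y]
  rw [key]
  exact hE
end

section
/- Let X be a topological space and S a nonempty subset. Then the following are equivalent: (i) for every family (V_s)_{s∈S} of open sets with s ∈ V_s and V_s = X for all but finitely many s, the intersection ∩_{s∈S} V_s is nonempty; (ii) for every finite family (V_i) of open sets each meeting S, the intersection ∩_i V_i is nonempty. -/
open Set Topology

/-- For a nonempty subset `S` of a topological space `X`, the two defining
conditions of membership in `H X` are equivalent: (i) any family of open sets
`V s ∋ s` (for `s ∈ S`), almost all equal to `X`, has nonempty intersection;
(ii) any finite family of open sets each meeting `S` has nonempty intersection. -/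
theorem stmt13 {X : Type*} [TopologicalSpace X] (S : Set X) (hS : S.Nonempty) :
    (∀ V : X → Set X, (∀ s ∈ S, IsOpen (V s) ∧ s ∈ V s) →
        {s ∈ S | V s ≠ univ}.Finite → (⋂ s ∈ S, V s).Nonempty) ↔
    (∀ I : Finset (Set X), (∀ V ∈ I, IsOpen V ∧ (S ∩ V).Nonempty) →
        (⋂₀ (I : Set (Set X))).Nonempty) := by
  obtain ⟨s₀, hs₀⟩ := hS
  constructor
  · intro h I hI
    -- choose a point of S ∩ V for each V ∈ I
    have hch : ∀ V : Set X, ∃ c : X, V ∈ I → c ∈ S ∩ V := by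
      intro V
      by_cases hV : V ∈ I
      · obtain ⟨c, hc⟩ := (hI V hV).2
        exact ⟨c, fun _ => hc⟩
      · exact ⟨s₀, fun h => absurd h hV⟩
    choose c hc using hch
    set W : X → Set X := fun s => ⋂ V ∈ I, ⋂ (_ : c V = s), V with hW
    have hWopen : ∀ s ∈ S, IsOpen (W s) ∧ s ∈ W s := by
      intro s hs
      constructor
      · refine I.finite_toSet.isOpen_biInter fun V hV => isOpen_iInter_of_finite fun h =>
          (hI V hV).1
      · simp only [hW, mem_iInter]
        intro V hV hcV
        exact hcV ▸ (hc V hV).2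
    have hfin : {s ∈ S | W s ≠ univ}.Finite := by
      apply (I.finite_toSet.image c).subset
      intro s hs
      by_contra hnot
      apply hs.2
      simp only [hW, eq_univ_iff_forall, mem_iInter]
      intro x V hV hcV
      exact absurd ⟨V, hV, hcV⟩ hnot
    obtain ⟨x, hx⟩ := h W hWopen hfin
    refine ⟨x, fun V hV => ?_⟩
    have hxW : x ∈ W (c V) := by
      simp only [mem_iInter] at hx
      exact hx (c V) (hc V hV).1
    simp only [hW, mem_iInter] at hxW
    exact hxW V hV rfl
  · intro h V hV hfin
    classical
    set I : Finset (Set X) := hfin.toFinset.image V with hI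
    have := h I ?_
    · obtain ⟨x, hx⟩ := this
      refine ⟨x, mem_iInter₂.mpr fun s hs => ?_⟩
      by_cases hVs : V s = univ
      · simp [hVs]
      · exact hx (V s) (by simp [hI, Finite.mem_toFinset]; exact ⟨s, ⟨hs, hVs⟩, rfl⟩)
    · intro W hW
      simp only [hI, Finset.mem_image, Finite.mem_toFinset] at hW
      obtain ⟨s, ⟨hs, -⟩, rfl⟩ := hW
      exact ⟨(hV s hs).1, ⟨s, hs, (hV s hs).2⟩⟩
end

section
/- Let X be a locally Hausdorff space and let S ⊆ X satisfy: every finite family of open sets each meeting S has nonempty intersection. Then for every Hausdorff open subspace V of X, the intersection V ∩ S has at most one element; in particular S is locally finite. -/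
open Set Topology

/-- In a locally Hausdorff space, any subset `S` satisfying the finite-intersection
condition defining `H X` meets every Hausdorff open subspace in at most one point;
in particular `S` is locally finite. -/
theorem stmt14 {X : Type*} [TopologicalSpace X]
    (hX : ∀ x : X, ∃ U : Set X, IsOpen U ∧ x ∈ U ∧ T2Space U)
    (S : Set X)
    (hS : ∀ I : Finset (Set X), (∀ V ∈ I, IsOpen V ∧ (S ∩ V).Nonempty) →
        (⋂₀ (I : Set (Set X))).Nonempty) :
    (∀ V : Set X, IsOpen V → T2Space V → (V ∩ S).Subsingleton) ∧
    (∀ x : X, ∃ U ∈ nhds x, (U ∩ S).Finite) := by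
  have key : ∀ V : Set X, IsOpen V → T2Space V → (V ∩ S).Subsingleton := by
    classical
    intro V hV hT2 a ha b hb
    by_contra hab
    have hab' : (⟨a, ha.1⟩ : V) ≠ ⟨b, hb.1⟩ := by
      simp only [ne_eq, Subtype.mk.injEq]; exact hab
    obtain ⟨A', B', hA'o, hB'o, haA, hbB, hdisj⟩ := t2_separation hab'
    obtain ⟨A, hAo, hAeq⟩ := isOpen_induced_iff.mp hA'o
    obtain ⟨B, hBo, hBeq⟩ := isOpen_induced_iff.mp hB'o
    have ha1 : a ∈ A ∩ V := ⟨by simpa [← hAeq] using haA, ha.1⟩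
    have hb1 : b ∈ B ∩ V := ⟨by simpa [← hBeq] using hbB, hb.1⟩
    obtain ⟨x, hx⟩ := hS {A ∩ V, B ∩ V} (by
      intro W hW
      simp only [Finset.mem_insert, Finset.mem_singleton] at hW
      rcases hW with rfl | rfl
      · exact ⟨hAo.inter hV, ⟨a, ha.2, ha1⟩⟩
      · exact ⟨hBo.inter hV, ⟨b, hb.2, hb1⟩⟩)
    simp only [Finset.coe_insert, Finset.coe_singleton, sInter_insert, sInter_singleton,
      mem_inter_iff] at hx
    have hxA' : (⟨x, hx.1.2⟩ : V) ∈ A' := hAeq ▸ hx.1.1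
    have hxB' : (⟨x, hx.1.2⟩ : V) ∈ B' := hBeq ▸ hx.2.1
    exact hdisj.ne_of_mem hxA' hxB' rfl
  refine ⟨key, fun x => ?_⟩
  obtain ⟨U, hUo, hxU, hT2⟩ := hX x
  exact ⟨U, hUo.mem_nhds hxU, (key U hUo hT2).finite⟩
end

section
/- Let X be a locally compact space. Then the space ĤX, consisting of all subsets S of X (including the empty set) such that every finite family of open sets each meeting S has nonempty intersection, endowed with the topology generated by the sets Ω_V = {S : S ∩ V ≠ ∅} for V open and Ω^Q = {S : S ∩ Q = ∅} for Q quasi-compact, is a Hausdorff space. -/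
open Set Topology

/-- The space `ĤX`: all subsets `S ⊆ X` that are either empty or nonempty and
satisfy the finite-intersection condition (every finite family of open sets each
meeting `S` has nonempty intersection). -/
def hatHX (X : Type*) [TopologicalSpace X] : Type _ :=
  {S : Set X // S = ∅ ∨ (S.Nonempty ∧
    ∀ I : Finset (Set X), (∀ V ∈ I, IsOpen V ∧ (S ∩ V).Nonempty) →
      (⋂₀ (I : Set (Set X))).Nonempty)}

/-- The topology on `ĤX` generated by the sets `Ω_V = {S : S ∩ V ≠ ∅}` for `V` open
and `Ω^Q = {S : S ∩ Q = ∅}` for `Q` quasi-compact. -/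
instance (X : Type*) [TopologicalSpace X] : TopologicalSpace (hatHX X) :=
  TopologicalSpace.generateFrom
    ({A | ∃ V : Set X, IsOpen V ∧ A = {S : hatHX X | (S.1 ∩ V).Nonempty}} ∪
     {A | ∃ Q : Set X, IsCompact Q ∧ A = {S : hatHX X | S.1 ∩ Q = ∅}})

/-- An element of `ĤX` meets an open subset of a Hausdorff subspace in
at most one point. -/
lemma hatHX_inter_subsingleton {X : Type*} [TopologicalSpace X]
    (T : hatHX X) {K W : Set X} (hK2 : T2Space K) (hW : IsOpen W)
    (hWK : W ⊆ K) : (T.1 ∩ W).Subsingleton := by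
  classical
  intro y₁ h₁ y₂ h₂
  by_contra hne
  have hT : T.1.Nonempty ∧ ∀ I : Finset (Set X),
      (∀ V ∈ I, IsOpen V ∧ (T.1 ∩ V).Nonempty) → (⋂₀ (I : Set (Set X))).Nonempty := by
    rcases T.2 with h | h
    · exact absurd (h ▸ h₁.1) (notMem_empty _)
    · exact h
  set p₁ : K := ⟨y₁, hWK h₁.2⟩
  set p₂ : K := ⟨y₂, hWK h₂.2⟩
  have hp : p₁ ≠ p₂ := fun h => hne (congrArg Subtype.val h)
  obtain ⟨O₁, O₂, hO₁, hO₂, hp₁, hp₂, hdis⟩ := hK2.t2 hp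
  obtain ⟨U₁, hU₁, hU₁eq⟩ := isOpen_induced_iff.mp hO₁
  obtain ⟨U₂, hU₂, hU₂eq⟩ := isOpen_induced_iff.mp hO₂
  set V₁ := U₁ ∩ W
  set V₂ := U₂ ∩ W
  have hmem : ∀ V ∈ ({V₁, V₂} : Finset (Set X)), IsOpen V ∧ (T.1 ∩ V).Nonempty := by
    intro V hV
    rcases Finset.mem_insert.mp hV with h | h
    · subst h
      refine ⟨hU₁.inter hW, ⟨y₁, h₁.1, ?_, h₁.2⟩⟩
      have : p₁ ∈ Subtype.val ⁻¹' U₁ := hU₁eq ▸ hp₁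
      exact this
    · rw [Finset.mem_singleton] at h
      subst h
      refine ⟨hU₂.inter hW, ⟨y₂, h₂.1, ?_, h₂.2⟩⟩
      have : p₂ ∈ Subtype.val ⁻¹' U₂ := hU₂eq ▸ hp₂
      exact this
  obtain ⟨z, hz⟩ := hT.2 _ hmem
  have hz₁ : z ∈ V₁ := hz V₁ (by simp)
  have hz₂ : z ∈ V₂ := hz V₂ (by simp)
  have hzK : z ∈ K := hWK hz₁.2
  have : (⟨z, hzK⟩ : K) ∈ O₁ ∩ O₂ := by
    constructor
    · rw [← hU₁eq]; exact hz₁.1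
    · rw [← hU₂eq]; exact hz₂.1
  exact (hdis.le_bot this : _)

/-- Basic open sets of the first kind. -/
lemma isOpen_omega_V {X : Type*} [TopologicalSpace X] {V : Set X} (hV : IsOpen V) :
    IsOpen {S : hatHX X | (S.1 ∩ V).Nonempty} :=
  TopologicalSpace.GenerateOpen.basic _ (Or.inl ⟨V, hV, rfl⟩)

/-- Basic open sets of the second kind. -/
lemma isOpen_omega_Q {X : Type*} [TopologicalSpace X] {Q : Set X} (hQ : IsCompact Q) :
    IsOpen {S : hatHX X | S.1 ∩ Q = ∅} :=
  TopologicalSpace.GenerateOpen.basic _ (Or.inr ⟨Q, hQ, rfl⟩)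

/-- Separation of two points of `ĤX`, when a witness `x ∈ S \ T` is given. -/
lemma hatHX_sep {X : Type*} [TopologicalSpace X] (hX : LocCompact X)
    (S T : hatHX X) {x : X} (hxS : x ∈ S.1) (hxT : x ∉ T.1) :
    ∃ u v : Set (hatHX X), IsOpen u ∧ IsOpen v ∧ S ∈ u ∧ T ∈ v ∧ Disjoint u v := by
  obtain ⟨K, hKnhds, hKc, hK2⟩ := hX x
  obtain ⟨W, hWK, hW, hxW⟩ := mem_nhds_iff.mp hKnhds
  haveI : CompactSpace K := isCompact_iff_compactSpace.mp hKc
  haveI := hK2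
  -- the set G = (W \ T) seen inside K is open, since T ∩ W is a subsingleton
  have hsub : (T.1 ∩ W).Subsingleton := hatHX_inter_subsingleton T hK2 hW hWK
  have hGopen : IsOpen ((Subtype.val : K → X) ⁻¹' (W \ T.1)) := by
    have heq : (Subtype.val : K → X) ⁻¹' (W \ T.1) =
        (Subtype.val : K → X) ⁻¹' W \ (Subtype.val : K → X) ⁻¹' (T.1 ∩ W) := by
      ext z
      simp only [mem_preimage, mem_diff, mem_inter_iff]
      tauto
    rw [heq]
    have hsub' : ((Subtype.val : K → X) ⁻¹' (T.1 ∩ W)).Subsingleton :=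
      hsub.preimage Subtype.val_injective
    have hclosed : IsClosed ((Subtype.val : K → X) ⁻¹' (T.1 ∩ W)) := by
      rcases hsub'.eq_empty_or_singleton with h | ⟨a, h⟩
      · rw [h]; exact isClosed_empty
      · rw [h]; exact isClosed_singleton
    exact (hW.preimage continuous_subtype_val).sdiff hclosed
  set x' : K := ⟨x, hWK hxW⟩
  have hx'G : x' ∈ (Subtype.val : K → X) ⁻¹' (W \ T.1) := ⟨hxW, hxT⟩
  obtain ⟨t, htn, htc, htG⟩ :=
    exists_mem_nhds_isClosed_subset (hGopen.mem_nhds hx'G)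
  have hx'int : x' ∈ interior t := mem_interior_iff_mem_nhds.mpr htn
  obtain ⟨U, hU, hUeq⟩ := isOpen_induced_iff.mp (isOpen_interior (s := t))
  set V := U ∩ W
  set Q := Subtype.val '' t
  have hQc : IsCompact Q := (htc.isCompact).image continuous_subtype_val
  have hxU : x ∈ U := by
    have : x' ∈ Subtype.val ⁻¹' U := hUeq ▸ hx'int
    exact this
  have hVQ : V ⊆ Q := by
    rintro z ⟨hzU, hzW⟩
    have hzK : z ∈ K := hWK hzW
    have : (⟨z, hzK⟩ : K) ∈ interior t := by rw [← hUeq]; exact hzU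
    exact ⟨⟨z, hzK⟩, interior_subset this, rfl⟩
  have hTQ : T.1 ∩ Q = ∅ := by
    ext z
    simp only [mem_inter_iff, mem_empty_iff_false, iff_false, not_and]
    rintro hzT ⟨z', hz't, rfl⟩
    exact (htG hz't).2 hzT
  refine ⟨{S : hatHX X | (S.1 ∩ V).Nonempty}, {S : hatHX X | S.1 ∩ Q = ∅},
    isOpen_omega_V (hU.inter hW), isOpen_omega_Q hQc, ⟨x, hxS, hxU, hxW⟩, hTQ, ?_⟩
  rw [Set.disjoint_left]
  rintro A ⟨z, hzA, hzV⟩ hA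
  have : z ∈ A.1 ∩ Q := ⟨hzA, hVQ hzV⟩
  rw [hA] at this
  exact this

/-- For a locally compact space `X`, the space `ĤX` is Hausdorff. -/
theorem stmt15 {X : Type*} [TopologicalSpace X] (hX : LocCompact X) :
    T2Space (hatHX X) := by
  constructor
  intro S T hST
  have hne : S.1 ≠ T.1 := fun h => hST (Subtype.ext h)
  by_cases h : S.1 ⊆ T.1
  · have h' : ¬ T.1 ⊆ S.1 := fun h' => hne (h.antisymm h')
    obtain ⟨x, hxT, hxS⟩ := Set.not_subset.mp h'
    obtain ⟨u, v, hu, hv, hTu, hSv, hdis⟩ := hatHX_sep hX T S hxT hxS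
    exact ⟨v, u, hv, hu, hSv, hTu, hdis.symm⟩
  · obtain ⟨x, hxS, hxT⟩ := Set.not_subset.mp h
    exact hatHX_sep hX S T hxS hxT
end
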